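/- Suppose g12 ≥ g22 μ-almost everywhere and g21 ≥ g11 μ-almost everywhere (uniformly strong IFC). Then for every power-split policy (α1, α2), min over j ∈ {1,...,6} of S_j(α,p) ≤ min over j ∈ {1,...,6} of S_j(0,p) = min(S1(0,p), S2(0,p), S3(0,p)). That is, the Han–Kobayashi sum-rate bound with joint coding across all fading states is maximized by transmitting only common messages at both users. -/

import Mathlib

open MeasureTheory

/-- `C(x) = log₂(1+x)`. -/
noncomputable def C (x : ℝ) : ℝ := Real.logb 2 (1 + x)

variable {Ω : Type*} [MeasurableSpace Ω]

/-- Han–Kobayashi sum-rate bound `S1(α,p)` (sum of the two individual-rate bounds). -/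
noncomputable def S1 (μ : Measure Ω) (g11 g12 g21 g22 p1 p2 a1 a2 : Ω → ℝ) : ℝ :=
  (∫ ω, C (g11 ω * p1 ω / (1 + a2 ω * g12 ω * p2 ω)) ∂μ)
    + ∫ ω, C (g22 ω * p2 ω / (1 + a1 ω * g21 ω * p1 ω)) ∂μ

/-- Han–Kobayashi sum-rate bound `S2(α,p)`. -/
noncomputable def S2 (μ : Measure Ω) (g11 g12 g21 g22 p1 p2 a1 a2 : Ω → ℝ) : ℝ :=
  (∫ ω, C ((g11 ω * p1 ω + (1 - a2 ω) * g12 ω * p2 ω) / (1 + a2 ω * g12 ω * p2 ω)) ∂μ)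
    + ∫ ω, C (a2 ω * g22 ω * p2 ω / (1 + a1 ω * g21 ω * p1 ω)) ∂μ

/-- Han–Kobayashi sum-rate bound `S3(α,p)`: `S2` with the roles of the two users swapped. -/
noncomputable def S3 (μ : Measure Ω) (g11 g12 g21 g22 p1 p2 a1 a2 : Ω → ℝ) : ℝ :=
  S2 μ g22 g21 g12 g11 p2 p1 a2 a1

/-- Han–Kobayashi sum-rate bound `S4(α,p)`. -/
noncomputable def S4 (μ : Measure Ω) (g11 g12 g21 g22 p1 p2 a1 a2 : Ω → ℝ) : ℝ :=
  (∫ ω, C ((a1 ω * g11 ω * p1 ω + (1 - a2 ω) * g12 ω * p2 ω) / (1 + a2 ω * g12 ω * p2 ω)) ∂μ)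
    + ∫ ω, C ((a2 ω * g22 ω * p2 ω + (1 - a1 ω) * g21 ω * p1 ω) / (1 + a1 ω * g21 ω * p1 ω)) ∂μ

/-- Han–Kobayashi sum-rate bound `S5(α,p)` (the `2R1 + R2` bound combined with `R2`). -/
noncomputable def S5 (μ : Measure Ω) (g11 g12 g21 g22 p1 p2 a1 a2 : Ω → ℝ) : ℝ :=
  ((∫ ω, C ((g11 ω * p1 ω + (1 - a2 ω) * g12 ω * p2 ω) / (1 + a2 ω * g12 ω * p2 ω)) ∂μ)
    + (∫ ω, C (a1 ω * g11 ω * p1 ω / (1 + a2 ω * g12 ω * p2 ω)) ∂μ)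
    + (∫ ω, C ((a2 ω * g22 ω * p2 ω + (1 - a1 ω) * g21 ω * p1 ω) / (1 + a1 ω * g21 ω * p1 ω)) ∂μ)
    + ∫ ω, C (g22 ω * p2 ω / (1 + a1 ω * g21 ω * p1 ω)) ∂μ) / 2

/-- Han–Kobayashi sum-rate bound `S6(α,p)`: `S5` with the roles of the two users swapped. -/
noncomputable def S6 (μ : Measure Ω) (g11 g12 g21 g22 p1 p2 a1 a2 : Ω → ℝ) : ℝ :=
  S5 μ g22 g21 g12 g11 p2 p1 a2 a1

/-- The Han–Kobayashi sum-rate bound: `min` over `j ∈ {1,…,6}` of `S_j(α,p)`. -/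
noncomputable def minS (μ : Measure Ω) (g11 g12 g21 g22 p1 p2 a1 a2 : Ω → ℝ) : ℝ :=
  min (S1 μ g11 g12 g21 g22 p1 p2 a1 a2)
    (min (S2 μ g11 g12 g21 g22 p1 p2 a1 a2)
      (min (S3 μ g11 g12 g21 g22 p1 p2 a1 a2)
        (min (S4 μ g11 g12 g21 g22 p1 p2 a1 a2)
          (min (S5 μ g11 g12 g21 g22 p1 p2 a1 a2) (S6 μ g11 g12 g21 g22 p1 p2 a1 a2)))))

/-!
At `α = 0` the six bounds reduce to `S1`, `S2`, `S3` and three quantities which, by the strong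
interference conditions `g11 ≤ g21`, `g22 ≤ g12`, dominate `S1` or the averages `(S1 + S2) / 2`,
`(S1 + S3) / 2`; so only `S1`, `S2`, `S3` matter there. Each of these can only grow when `α` is
set to `0`: for `S1` the interference in the denominators disappears, and for `S2` the chain rule
`C t + C ((s - t) / (1 + t)) = C s` with `s = g11 p1 + g12 p2`, `t = α2 g12 p2` shows that the
private rate `C (α2 g22 p2 / (1 + α1 g21 p1)) ≤ C t` of user 2 is already paid for inside `C s`.
-/

@[simp]
lemma C_zero : C 0 = 0 := by simp [C]

lemma C_nonneg {x : ℝ} (hx : 0 ≤ x) : 0 ≤ C x :=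
  Real.logb_nonneg one_lt_two (by linarith)

lemma C_le_C {x y : ℝ} (hx : -1 < x) (h : x ≤ y) : C x ≤ C y :=
  Real.logb_le_logb_of_le one_lt_two (by linarith) (by linarith)

lemma C_div_one_add_le {x d : ℝ} (hx : 0 ≤ x) (hd : 0 ≤ d) : C (x / (1 + d)) ≤ C x :=
  C_le_C (by linarith [div_nonneg hx (by linarith : (0 : ℝ) ≤ 1 + d)])
    (div_le_self hx (by linarith))

lemma C_add_C_div {s t : ℝ} (hs : -1 < s) (ht : -1 < t) :
    C t + C ((s - t) / (1 + t)) = C s := by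
  have ht' : 0 < 1 + t := by linarith
  have hq : 1 + (s - t) / (1 + t) = (1 + s) / (1 + t) := by field_simp; ring
  unfold C
  rw [hq, ← Real.logb_mul ht'.ne' (div_pos (by linarith) ht').ne', mul_div_cancel₀ _ ht'.ne']

lemma measurable_C : Measurable C :=
  (Real.measurable_log.comp (measurable_const.add measurable_id)).div_const _

lemma C_private_add_C_common_le {g11 g12 g21 g22 p1 p2 a1 a2 : ℝ}
    (hg11 : 0 ≤ g11) (hg12 : 0 ≤ g12) (hg21 : 0 ≤ g21) (hg22 : 0 ≤ g22)
    (hp1 : 0 ≤ p1) (hp2 : 0 ≤ p2) (ha1 : 0 ≤ a1) (ha2 : 0 ≤ a2) (hg : g22 ≤ g12) :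
    C ((g11 * p1 + (1 - a2) * g12 * p2) / (1 + a2 * g12 * p2))
      + C (a2 * g22 * p2 / (1 + a1 * g21 * p1)) ≤ C (g11 * p1 + g12 * p2) := by
  have hprivate : C (a2 * g22 * p2 / (1 + a1 * g21 * p1)) ≤ C (a2 * g12 * p2) :=
    (C_div_one_add_le (by positivity) (by positivity)).trans
      (C_le_C (by linarith [show 0 ≤ a2 * g22 * p2 by positivity]) (by gcongr))
  have hchain := C_add_C_div (s := g11 * p1 + g12 * p2) (t := a2 * g12 * p2)
    (by linarith [show 0 ≤ g11 * p1 + g12 * p2 by positivity])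
    (by linarith [show 0 ≤ a2 * g12 * p2 by positivity])
  calc _ ≤ C ((g11 * p1 + (1 - a2) * g12 * p2) / (1 + a2 * g12 * p2)) + C (a2 * g12 * p2) :=
        add_le_add_right hprivate _
    _ = C (g11 * p1 + g12 * p2) := by
        rw [add_comm, ← hchain]
        congr 3
        ring

section Integrals

variable {μ : Measure Ω}

lemma integral_add_le_of_nonneg {f g h : Ω → ℝ} (hf : 0 ≤ᵐ[μ] f) (hg : 0 ≤ᵐ[μ] g)
    (hh : Integrable h μ) (hle : f + g ≤ᵐ[μ] h) : ∫ ω, f ω ∂μ + ∫ ω, g ω ∂μ ≤ ∫ ω, h ω ∂μ := by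
  have hfh : ∫ ω, f ω ∂μ ≤ ∫ ω, h ω ∂μ := integral_mono_of_nonneg hf hh <| by
    filter_upwards [hg, hle] with ω hgω hleω
    linarith [show f ω + g ω ≤ h ω from hleω, show 0 ≤ g ω from hgω]
  have hgh : ∫ ω, g ω ∂μ ≤ ∫ ω, h ω ∂μ := integral_mono_of_nonneg hg hh <| by
    filter_upwards [hf, hle] with ω hfω hleω
    linarith [show f ω + g ω ≤ h ω from hleω, show 0 ≤ f ω from hfω]
  -- a non-integrable `f` or `g` has Bochner integral `0`, so the bounds above suffice
  by_cases hfi : Integrable f μ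
  · by_cases hgi : Integrable g μ
    · rw [← integral_add hfi hgi]
      exact integral_mono_of_nonneg (hf.mp (hg.mono fun ω hgω hfω => add_nonneg hfω hgω)) hh hle
    · rwa [integral_undef hgi, add_zero]
  · rwa [integral_undef hfi, zero_add]

lemma integrable_C_of_le {f g : Ω → ℝ} (hf : AEMeasurable f μ) (hf0 : ∀ ω, 0 ≤ f ω)
    (hle : ∀ ω, f ω ≤ g ω) (hg : Integrable (fun ω => C (g ω)) μ) :
    Integrable (fun ω => C (f ω)) μ :=
  hg.mono' (measurable_C.comp_aemeasurable hf).aestronglyMeasurable <| ae_of_all _ fun ω => by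
    rw [Real.norm_eq_abs, abs_of_nonneg (C_nonneg (hf0 ω))]
    exact C_le_C (by linarith [hf0 ω]) (hle ω)

lemma integral_C_mul_le_of_le {g g' p : Ω → ℝ} (hg : ∀ ω, 0 ≤ g ω) (hp : ∀ ω, 0 ≤ p ω)
    (hle : ∀ᵐ ω ∂μ, g ω ≤ g' ω) (hI : Integrable (fun ω => C (g' ω * p ω)) μ) :
    ∫ ω, C (g ω * p ω) ∂μ ≤ ∫ ω, C (g' ω * p ω) ∂μ :=
  integral_mono_of_nonneg (ae_of_all _ fun ω => C_nonneg (mul_nonneg (hg ω) (hp ω))) hI <| by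
    filter_upwards [hle] with ω hω
    exact C_le_C (by linarith [mul_nonneg (hg ω) (hp ω)]) (mul_le_mul_of_nonneg_right hω (hp ω))

lemma integral_C_div_one_add_le {f d : Ω → ℝ} (hf : ∀ ω, 0 ≤ f ω) (hd : ∀ ω, 0 ≤ d ω)
    (hI : Integrable (fun ω => C (f ω)) μ) :
    ∫ ω, C (f ω / (1 + d ω)) ∂μ ≤ ∫ ω, C (f ω) ∂μ :=
  integral_mono_of_nonneg
    (ae_of_all _ fun ω => C_nonneg (div_nonneg (hf ω) (by linarith [hd ω]))) hI
    (ae_of_all _ fun ω => C_div_one_add_le (hf ω) (hd ω))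

end Integrals

section SumRateBounds

variable {μ : Measure Ω} {g11 g12 g21 g22 p1 p2 : Ω → ℝ}

lemma S1_le_S1_zero {a1 a2 : Ω → ℝ}
    (hg11 : ∀ ω, 0 ≤ g11 ω) (hg12 : ∀ ω, 0 ≤ g12 ω) (hg21 : ∀ ω, 0 ≤ g21 ω)
    (hg22 : ∀ ω, 0 ≤ g22 ω) (hp1 : ∀ ω, 0 ≤ p1 ω) (hp2 : ∀ ω, 0 ≤ p2 ω)
    (ha1 : ∀ ω, 0 ≤ a1 ω) (ha2 : ∀ ω, 0 ≤ a2 ω)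
    (hI1 : Integrable (fun ω => C (g11 ω * p1 ω)) μ)
    (hI2 : Integrable (fun ω => C (g22 ω * p2 ω)) μ) :
    S1 μ g11 g12 g21 g22 p1 p2 a1 a2 ≤ S1 μ g11 g12 g21 g22 p1 p2 0 0 := by
  simp only [S1, Pi.zero_apply, zero_mul, add_zero, div_one]
  exact add_le_add
    (integral_C_div_one_add_le (fun ω => mul_nonneg (hg11 ω) (hp1 ω))
      (fun ω => mul_nonneg (mul_nonneg (ha2 ω) (hg12 ω)) (hp2 ω)) hI1)
    (integral_C_div_one_add_le (fun ω => mul_nonneg (hg22 ω) (hp2 ω))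
      (fun ω => mul_nonneg (mul_nonneg (ha1 ω) (hg21 ω)) (hp1 ω)) hI2)

lemma S2_le_S2_zero {a1 a2 : Ω → ℝ}
    (hg11 : ∀ ω, 0 ≤ g11 ω) (hg12 : ∀ ω, 0 ≤ g12 ω) (hg21 : ∀ ω, 0 ≤ g21 ω)
    (hg22 : ∀ ω, 0 ≤ g22 ω) (hp1 : ∀ ω, 0 ≤ p1 ω) (hp2 : ∀ ω, 0 ≤ p2 ω)
    (ha1 : ∀ ω, 0 ≤ a1 ω) (ha2 : ∀ ω, a2 ω ∈ Set.Icc (0 : ℝ) 1)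
    (h22 : ∀ᵐ ω ∂μ, g22 ω ≤ g12 ω)
    (hI : Integrable (fun ω => C (g11 ω * p1 ω + g12 ω * p2 ω)) μ) :
    S2 μ g11 g12 g21 g22 p1 p2 a1 a2 ≤ S2 μ g11 g12 g21 g22 p1 p2 0 0 := by
  simp only [S2, Pi.zero_apply, zero_mul, add_zero, div_one, sub_zero, one_mul, C_zero,
    integral_zero]
  refine integral_add_le_of_nonneg (ae_of_all _ fun ω => C_nonneg ?_)
    (ae_of_all _ fun ω => C_nonneg ?_) hI ?_
  · have := sub_nonneg.2 (ha2 ω).2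
    have := (ha2 ω).1; have := hg11 ω; have := hg12 ω; have := hp1 ω; have := hp2 ω
    positivity
  · have := (ha2 ω).1; have := ha1 ω; have := hg21 ω; have := hg22 ω; have := hp1 ω
    have := hp2 ω
    positivity
  · filter_upwards [h22] with ω hω
    exact C_private_add_C_common_le (hg11 ω) (hg12 ω) (hg21 ω) (hg22 ω) (hp1 ω) (hp2 ω)
      (ha1 ω) (ha2 ω).1 hω

lemma S5_zero :
    S5 μ g11 g12 g21 g22 p1 p2 0 0 = (S2 μ g11 g12 g21 g22 p1 p2 0 0
      + ∫ ω, C (g21 ω * p1 ω) ∂μ + ∫ ω, C (g22 ω * p2 ω) ∂μ) / 2 := by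
  simp [S5, S2]

lemma min_six_eq_min_three {s1 s2 s3 s4 s5 s6 : ℝ} (h4 : s1 ≤ s4) (h5 : s1 + s2 ≤ 2 * s5)
    (h6 : s1 + s3 ≤ 2 * s6) :
    min s1 (min s2 (min s3 (min s4 (min s5 s6)))) = min s1 (min s2 s3) := by
  have h1 := min_le_left s1 (min s2 s3)
  have h2 := (min_le_right s1 (min s2 s3)).trans (min_le_left s2 s3)
  have h3 := (min_le_right s1 (min s2 s3)).trans (min_le_right s2 s3)
  have hrest : min s1 (min s2 s3) ≤ min s4 (min s5 s6) :=
    le_min (h1.trans h4) (le_min (by linarith) (by linarith))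
  rw [← min_assoc s2, ← min_assoc s1, min_eq_left hrest]

lemma minS_zero_eq
    (hg11 : ∀ ω, 0 ≤ g11 ω) (hg22 : ∀ ω, 0 ≤ g22 ω) (hp1 : ∀ ω, 0 ≤ p1 ω) (hp2 : ∀ ω, 0 ≤ p2 ω)
    (h22 : ∀ᵐ ω ∂μ, g22 ω ≤ g12 ω) (h11 : ∀ᵐ ω ∂μ, g11 ω ≤ g21 ω)
    (hI12 : Integrable (fun ω => C (g12 ω * p2 ω)) μ)
    (hI21 : Integrable (fun ω => C (g21 ω * p1 ω)) μ) :
    minS μ g11 g12 g21 g22 p1 p2 0 0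
      = min (S1 μ g11 g12 g21 g22 p1 p2 0 0)
          (min (S2 μ g11 g12 g21 g22 p1 p2 0 0) (S3 μ g11 g12 g21 g22 p1 p2 0 0)) := by
  have h1 := integral_C_mul_le_of_le hg11 hp1 h11 hI21
  have h2 := integral_C_mul_le_of_le hg22 hp2 h22 hI12
  refine min_six_eq_min_three ?_ ?_ ?_
  · simp only [S1, S4, Pi.zero_apply, zero_mul, zero_add, add_zero, div_one, sub_zero, one_mul]
    linarith
  · rw [S5_zero]
    simp only [S1, Pi.zero_apply, zero_mul, add_zero, div_one]
    linarith
  · rw [S6, S5_zero, S3]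
    simp only [S1, Pi.zero_apply, zero_mul, add_zero, div_one]
    linarith

end SumRateBounds

theorem stmt3_general (μ : Measure Ω)
    (g11 g12 g21 g22 p1 p2 : Ω → ℝ)
    (hg11 : Measurable g11) (hg12 : Measurable g12)
    (hg21 : Measurable g21) (hg22 : Measurable g22)
    (hp1 : Measurable p1) (hp2 : Measurable p2)
    (hg11n : ∀ ω, 0 ≤ g11 ω) (hg12n : ∀ ω, 0 ≤ g12 ω)
    (hg21n : ∀ ω, 0 ≤ g21 ω) (hg22n : ∀ ω, 0 ≤ g22 ω)
    (hp1n : ∀ ω, 0 ≤ p1 ω) (hp2n : ∀ ω, 0 ≤ p2 ω)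
    (hUS1 : ∀ᵐ ω ∂μ, g22 ω ≤ g12 ω) (hUS2 : ∀ᵐ ω ∂μ, g11 ω ≤ g21 ω)
    (hI1 : Integrable (fun ω => C (g11 ω * p1 ω + g12 ω * p2 ω)) μ)
    (hI2 : Integrable (fun ω => C (g21 ω * p1 ω + g22 ω * p2 ω)) μ)
    (a1 a2 : Ω → ℝ)
    (ha1r : ∀ ω, a1 ω ∈ Set.Icc (0 : ℝ) 1) (ha2r : ∀ ω, a2 ω ∈ Set.Icc (0 : ℝ) 1) :
    minS μ g11 g12 g21 g22 p1 p2 a1 a2 ≤ minS μ g11 g12 g21 g22 p1 p2 0 0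
    ∧ minS μ g11 g12 g21 g22 p1 p2 0 0
        = min (S1 μ g11 g12 g21 g22 p1 p2 0 0)
            (min (S2 μ g11 g12 g21 g22 p1 p2 0 0) (S3 μ g11 g12 g21 g22 p1 p2 0 0)) := by
  have hX := integrable_C_of_le (by fun_prop) (fun ω => mul_nonneg (hg11n ω) (hp1n ω))
    (fun ω => le_add_of_nonneg_right (mul_nonneg (hg12n ω) (hp2n ω))) hI1
  have hV := integrable_C_of_le (by fun_prop) (fun ω => mul_nonneg (hg12n ω) (hp2n ω))
    (fun ω => le_add_of_nonneg_left (mul_nonneg (hg11n ω) (hp1n ω))) hI1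
  have hU := integrable_C_of_le (by fun_prop) (fun ω => mul_nonneg (hg21n ω) (hp1n ω))
    (fun ω => le_add_of_nonneg_right (mul_nonneg (hg22n ω) (hp2n ω))) hI2
  have hY := integrable_C_of_le (by fun_prop) (fun ω => mul_nonneg (hg22n ω) (hp2n ω))
    (fun ω => le_add_of_nonneg_left (mul_nonneg (hg21n ω) (hp1n ω))) hI2
  have hzero := minS_zero_eq hg11n hg22n hp1n hp2n hUS1 hUS2 hV hU
  refine ⟨?_, hzero⟩
  rw [hzero]
  calc minS μ g11 g12 g21 g22 p1 p2 a1 a2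
      ≤ min (S1 μ g11 g12 g21 g22 p1 p2 a1 a2)
          (min (S2 μ g11 g12 g21 g22 p1 p2 a1 a2) (S3 μ g11 g12 g21 g22 p1 p2 a1 a2)) :=
        min_le_min le_rfl (min_le_min le_rfl (min_le_left _ _))
    _ ≤ _ := by
        refine min_le_min ?_ (min_le_min ?_ ?_)
        · exact S1_le_S1_zero hg11n hg12n hg21n hg22n hp1n hp2n (fun ω => (ha1r ω).1)
            (fun ω => (ha2r ω).1) hX hY
        · exact S2_le_S2_zero hg11n hg12n hg21n hg22n hp1n hp2n (fun ω => (ha1r ω).1) ha2r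
            hUS1 hI1
        · exact S2_le_S2_zero hg22n hg21n hg12n hg11n hp2n hp1n (fun ω => (ha2r ω).1) ha1r
            hUS2 (by simpa only [add_comm] using hI2)

/-- For a uniformly strong ergodic fading IFC (`g12 ≥ g22` and `g21 ≥ g11` a.e.),
for every power-split policy `(α1, α2)`,
`min_{j∈{1,…,6}} S_j(α,p) ≤ min_{j∈{1,…,6}} S_j(0,p) = min(S1(0,p), S2(0,p), S3(0,p))`:
the Han–Kobayashi sum-rate bound with joint coding across all fading states is maximized by
transmitting only common messages at both users. -/
theorem stmt3 (μ : Measure Ω) [IsProbabilityMeasure μ]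
    (g11 g12 g21 g22 p1 p2 : Ω → ℝ)
    (hg11 : Measurable g11) (hg12 : Measurable g12)
    (hg21 : Measurable g21) (hg22 : Measurable g22)
    (hp1 : Measurable p1) (hp2 : Measurable p2)
    (hg11n : ∀ ω, 0 ≤ g11 ω) (hg12n : ∀ ω, 0 ≤ g12 ω)
    (hg21n : ∀ ω, 0 ≤ g21 ω) (hg22n : ∀ ω, 0 ≤ g22 ω)
    (hp1n : ∀ ω, 0 ≤ p1 ω) (hp2n : ∀ ω, 0 ≤ p2 ω)
    (hUS1 : ∀ᵐ ω ∂μ, g22 ω ≤ g12 ω) (hUS2 : ∀ᵐ ω ∂μ, g11 ω ≤ g21 ω)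
    (hI1 : Integrable (fun ω => C (g11 ω * p1 ω + g12 ω * p2 ω)) μ)
    (hI2 : Integrable (fun ω => C (g21 ω * p1 ω + g22 ω * p2 ω)) μ)
    (a1 a2 : Ω → ℝ) (ha1 : Measurable a1) (ha2 : Measurable a2)
    (ha1r : ∀ ω, a1 ω ∈ Set.Icc (0 : ℝ) 1) (ha2r : ∀ ω, a2 ω ∈ Set.Icc (0 : ℝ) 1) :
    minS μ g11 g12 g21 g22 p1 p2 a1 a2 ≤ minS μ g11 g12 g21 g22 p1 p2 0 0
    ∧ minS μ g11 g12 g21 g22 p1 p2 0 0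
        = min (S1 μ g11 g12 g21 g22 p1 p2 0 0)
            (min (S2 μ g11 g12 g21 g22 p1 p2 0 0) (S3 μ g11 g12 g21 g22 p1 p2 0 0)) :=
  stmt3_general μ g11 g12 g21 g22 p1 p2 hg11 hg12 hg21 hg22 hp1 hp2 hg11n hg12n hg21n hg22n hp1n
    hp2n hUS1 hUS2 hI1 hI2 a1 a2 ha1r ha2r
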